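/- arXiv:2601.06671 — 2 statements merged into one kernel-verified Lean document; each statement's English description precedes it below -/
import Mathlib

section
/- Let A, B be symmetric positive definite p×p matrices whose eigenvalues lie in [1/M, 1/m] for 0 < m ≤ M. Then (1/2)[trace(B⁻¹A) − p + log(det B/det A)] ≤ K ‖B − A‖_F² for a constant K depending only on m and M (e.g. K = (M/m)³ M² / 2). -/
/-!
Put `E = B^{-1/2} A B^{-1/2}` (`whiten B A`). Then `tr(B⁻¹A) = tr E` and `det B / det A = 1 / det E`,
so the left side is `½ ∑ φ(λᵢ)` over the eigenvalues `λᵢ` of `E`, with `φ(x) = x - 1 - log x`.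
The eigenvalue bounds give `(m/M)·1 ≤ E` in the Loewner order, and `φ(x) ≤ (x - 1)² / c` for
`x ≥ c > 0`, so the sum is at most `(M/m) tr((E - 1)²)`. Finally `E - 1 = B^{-1/2}(A - B)B^{-1/2}`
and `B⁻¹ ≤ M·1`, whence `tr((E - 1)²) ≤ M² ‖A - B‖_F²`.
-/

open Matrix

/-- The Frobenius norm of a matrix. -/
noncomputable def frob {p : ℕ} (A : Matrix (Fin p) (Fin p) ℝ) : ℝ :=
  Real.sqrt (∑ i, ∑ j, (A i j) ^ 2)

open scoped MatrixOrder

lemma Real.sub_one_sub_log_le_sq_div {c x : ℝ} (hc : 0 < c) (hcx : c ≤ x) :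
    x - 1 - Real.log x ≤ (x - 1) ^ 2 / c := by
  have hx : 0 < x := hc.trans_le hcx
  calc x - 1 - Real.log x ≤ x - 1 - (1 - x⁻¹) := by
        linarith [Real.one_sub_inv_le_log_of_pos hx]
    _ = (x - 1) ^ 2 / x := by field_simp
    _ ≤ (x - 1) ^ 2 / c := div_le_div_of_nonneg_left (sq_nonneg _) hc hcx

namespace Matrix

variable {n : Type*} [Fintype n]

lemma trace_mono {X Y : Matrix n n ℝ} (h : X ≤ Y) : X.trace ≤ Y.trace := by
  simpa [trace_sub] using (le_iff.mp h).trace_nonneg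

variable [DecidableEq n]

lemma trace_transpose_mul_mul_le {X : Matrix n n ℝ} {c : ℝ} (h : X ≤ c • 1)
    (Y : Matrix n n ℝ) : (Yᵀ * X * Y).trace ≤ c * (Yᵀ * Y).trace := by
  have := trace_mono (star_left_conjugate_le_conjugate h Y)
  rwa [star_eq_conjTranspose, conjTranspose_eq_transpose_of_trivial, Matrix.mul_smul,
    Matrix.mul_one, Matrix.smul_mul, trace_smul, smul_eq_mul] at this

lemma trace_conj_mul_self_le {S C : Matrix n n ℝ} (hS : S.IsSymm) (hC : C.IsSymm) {M : ℝ}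
    (hM : 0 ≤ M) (hSM : S * S ≤ M • 1) :
    (S * C * S * (S * C * S)).trace ≤ M ^ 2 * (C * C).trace := by
  have h1 : S * C * S * (S * C * S) = (C * S)ᵀ * (S * S) * (C * S) := by
    rw [transpose_mul, hS.eq, hC.eq]
    simp only [Matrix.mul_assoc]
  have h2 : ((C * S)ᵀ * (C * S)).trace = (Cᵀ * (S * S) * C).trace := by
    rw [transpose_mul, hS.eq, hC.eq, Matrix.mul_assoc, trace_mul_comm, Matrix.mul_assoc,
      Matrix.mul_assoc, trace_mul_comm, Matrix.mul_assoc]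
  calc (S * C * S * (S * C * S)).trace
      ≤ M * ((C * S)ᵀ * (C * S)).trace := h1 ▸ trace_transpose_mul_mul_le hSM _
    _ ≤ M * (M * (Cᵀ * C).trace) :=
        h2 ▸ mul_le_mul_of_nonneg_left (trace_transpose_mul_mul_le hSM C) hM
    _ = M ^ 2 * (C * C).trace := by rw [hC.eq]; ring

namespace IsHermitian

lemma le_smul_one_iff {X : Matrix n n ℝ} (hX : X.IsHermitian) {c : ℝ} :
    X ≤ c • 1 ↔ ∀ i, hX.eigenvalues i ≤ c := by
  rw [← Algebra.algebraMap_eq_smul_one, le_algebraMap_iff_spectrum_le hX.isSelfAdjoint,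
    hX.spectrum_real_eq_range_eigenvalues, Set.forall_mem_range]

lemma smul_one_le_iff {X : Matrix n n ℝ} (hX : X.IsHermitian) {c : ℝ} :
    c • 1 ≤ X ↔ ∀ i, c ≤ hX.eigenvalues i := by
  rw [← Algebra.algebraMap_eq_smul_one, algebraMap_le_iff_le_spectrum hX.isSelfAdjoint,
    hX.spectrum_real_eq_range_eigenvalues, Set.forall_mem_range]

lemma trace_cfc {X : Matrix n n ℝ} (hX : X.IsHermitian) (f : ℝ → ℝ) :
    (cfc f X).trace = ∑ i, f (hX.eigenvalues i) := by
  rw [hX.cfc_eq, IsHermitian.cfc, Unitary.conjStarAlgAut_apply, trace_mul_cycle,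
    Unitary.coe_star_mul_self, one_mul, trace_diagonal]
  rfl

lemma trace_sub_one_mul_self {X : Matrix n n ℝ} (hX : X.IsHermitian) :
    ((X - 1) * (X - 1)).trace = ∑ i, (hX.eigenvalues i - 1) ^ 2 := by
  have h := hX.trace_cfc fun x => (x - 1) * (x - 1)
  rw [cfc_mul (fun x : ℝ => x - 1) (fun x : ℝ => x - 1) X,
    cfc_sub (fun x : ℝ => x) (fun _ => 1) X, cfc_id' ℝ X, cfc_const_one ℝ X] at h
  simpa only [sq] using h

end IsHermitian

noncomputable def whiten (B A : Matrix n n ℝ) : Matrix n n ℝ :=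
  CFC.sqrt B⁻¹ * A * CFC.sqrt B⁻¹

variable {A A' B : Matrix n n ℝ}

lemma isHermitian_sqrt (X : Matrix n n ℝ) : (CFC.sqrt X).IsHermitian :=
  (CFC.sqrt_nonneg X).posSemidef.isHermitian

lemma IsHermitian.whiten (hA : A.IsHermitian) : (whiten B A).IsHermitian := by
  have := isHermitian_conjTranspose_mul_mul (CFC.sqrt B⁻¹) hA
  rwa [(isHermitian_sqrt B⁻¹).eq] at this

lemma whiten_mono (h : A ≤ A') : whiten B A ≤ whiten B A' :=
  conjugate_le_conjugate_of_nonneg h (CFC.sqrt_nonneg B⁻¹)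

lemma whiten_sub : whiten B (A - A') = whiten B A - whiten B A' := by
  simp only [whiten, Matrix.mul_sub, Matrix.sub_mul]

lemma whiten_smul (c : ℝ) : whiten B (c • A) = c • whiten B A := by
  simp only [whiten, Matrix.mul_smul, Matrix.smul_mul]

namespace PosDef

lemma whiten_self (hB : B.PosDef) : whiten B B = 1 := by
  have hR : IsUnit (CFC.sqrt B).det :=
    (isUnit_iff_isUnit_det _).mp ((CFC.isUnit_sqrt_iff B hB.posSemidef.nonneg).mpr hB.isUnit)
  rw [whiten, ← hB.posSemidef.inv_sqrt]
  nth_rw 2 [← CFC.sqrt_mul_sqrt_self B hB.posSemidef.nonneg]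
  rw [← mul_assoc, nonsing_inv_mul _ hR, one_mul, mul_nonsing_inv _ hR]

lemma sqrt_inv_mul_self (hB : B.PosDef) : CFC.sqrt B⁻¹ * CFC.sqrt B⁻¹ = B⁻¹ :=
  CFC.sqrt_mul_sqrt_self _ hB.inv.posSemidef.nonneg

lemma whiten_one (hB : B.PosDef) : whiten B 1 = B⁻¹ := by
  rw [whiten, Matrix.mul_one, hB.sqrt_inv_mul_self]

lemma trace_whiten (hB : B.PosDef) : (whiten B A).trace = (B⁻¹ * A).trace := by
  rw [whiten, trace_mul_cycle, hB.sqrt_inv_mul_self]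

lemma det_whiten (hB : B.PosDef) : (whiten B A).det = A.det / B.det := by
  rw [whiten, det_mul, det_mul, mul_right_comm, ← det_mul, hB.sqrt_inv_mul_self, det_nonsing_inv,
    Ring.inverse_eq_inv', div_eq_mul_inv, mul_comm]

lemma inv_le_smul_one (hB : B.PosDef) {M : ℝ} (hM : 0 < M) (h : M⁻¹ • 1 ≤ B) :
    B⁻¹ ≤ M • 1 := by
  have := smul_le_smul_of_nonneg_left (whiten_mono (B := B) h) hM.le
  rwa [whiten_smul, hB.whiten_one, hB.whiten_self, smul_smul, mul_inv_cancel₀ hM.ne',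
    one_smul] at this

lemma div_smul_one_le_whiten (hB : B.PosDef) {a b : ℝ} (ha : 0 ≤ a) (hb : 0 < b)
    (hA : a • 1 ≤ A) (hBb : B ≤ b • 1) : (a / b) • 1 ≤ whiten B A := by
  have h : (a / b) • B ≤ A :=
    calc (a / b) • B ≤ (a / b) • b • 1 := smul_le_smul_of_nonneg_left hBb (by positivity)
      _ = a • 1 := by rw [smul_smul, div_mul_cancel₀ a hb.ne']
      _ ≤ A := hA
  simpa [whiten_smul, hB.whiten_self] using whiten_mono (B := B) h

lemma trace_whiten_mul_self_le (hB : B.PosDef) {M : ℝ} (hM : 0 < M) (hBM : M⁻¹ • 1 ≤ B)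
    {C : Matrix n n ℝ} (hC : C.IsHermitian) :
    (whiten B C * whiten B C).trace ≤ M ^ 2 * (C * C).trace :=
  trace_conj_mul_self_le (isHermitian_iff_isSymm.mp (isHermitian_sqrt _))
    (isHermitian_iff_isSymm.mp hC) hM.le
    (by rw [hB.sqrt_inv_mul_self]; exact hB.inv_le_smul_one hM hBM)

lemma trace_inv_mul_sub_card_add_log_det_div (hB : B.PosDef) (hA : A.det ≠ 0)
    (hE : (whiten B A).IsHermitian) :
    (B⁻¹ * A).trace - Fintype.card n + Real.log (B.det / A.det)
      = ∑ i, (hE.eigenvalues i - 1 - Real.log (hE.eigenvalues i)) := by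
  have hdet : ∏ i, hE.eigenvalues i = A.det / B.det := by
    simpa [hB.det_whiten] using hE.det_eq_prod_eigenvalues.symm
  have hne : ∀ i ∈ Finset.univ, hE.eigenvalues i ≠ 0 :=
    Finset.prod_ne_zero_iff.mp (hdet ▸ div_ne_zero hA hB.det_pos.ne')
  rw [Finset.sum_sub_distrib, Finset.sum_sub_distrib, ← Real.log_prod hne, hdet, ← inv_div,
    Real.log_inv, ← hB.trace_whiten, hE.trace_eq_sum_eigenvalues]
  simp [sub_eq_add_neg]

end PosDef

end Matrix

lemma frob_sq_eq_trace {p : ℕ} (C : Matrix (Fin p) (Fin p) ℝ) : frob C ^ 2 = (C * Cᵀ).trace := by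
  rw [frob, Real.sq_sqrt (by positivity)]
  simp [trace, mul_apply, sq]

/-- If `A`, `B` are symmetric positive definite with eigenvalues in `[1/M, 1/m]`
(`0 < m ≤ M`), then `(1/2)[trace(B⁻¹A) − p + log(det B/det A)] ≤ K ‖B − A‖_F²`
with `K = (M/m)³ M² / 2`. -/
theorem stmt_11 {p : ℕ} (A B : Matrix (Fin p) (Fin p) ℝ)
    (hApd : A.PosDef) (hBpd : B.PosDef)
    (hA : A.IsHermitian) (hB : B.IsHermitian)
    (m M : ℝ) (hm : 0 < m) (hmM : m ≤ M)
    (heigA : ∀ i, 1 / M ≤ hA.eigenvalues i ∧ hA.eigenvalues i ≤ 1 / m)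
    (heigB : ∀ i, 1 / M ≤ hB.eigenvalues i ∧ hB.eigenvalues i ≤ 1 / m) :
    (1 / 2) * (Matrix.trace (B⁻¹ * A) - p + Real.log (B.det / A.det))
      ≤ ((M / m) ^ 3 * M ^ 2 / 2) * (frob (B - A)) ^ 2 := by
  have hM : 0 < M := hm.trans_le hmM
  have hE : (whiten B A).IsHermitian := hA.whiten
  have hspec : ∀ i, m / M ≤ hE.eigenvalues i := by
    have h := hBpd.div_smul_one_le_whiten (by positivity) (by positivity)
      (hA.smul_one_le_iff.mpr fun i => (heigA i).1) (hB.le_smul_one_iff.mpr fun i => (heigB i).2)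
    rwa [show 1 / M / (1 / m) = m / M by field_simp, hE.smul_one_le_iff] at h
  have hsq : ∑ i, (hE.eigenvalues i - 1) ^ 2 ≤ M ^ 2 * frob (B - A) ^ 2 := by
    have h := hBpd.trace_whiten_mul_self_le hM
      (hB.smul_one_le_iff.mpr fun i => one_div M ▸ (heigB i).1) (hA.sub hB)
    rw [frob_sq_eq_trace, (isHermitian_iff_isSymm.mp (hB.sub hA)).eq]
    rwa [whiten_sub, hBpd.whiten_self, hE.trace_sub_one_mul_self, ← neg_sub B A,
      neg_mul_neg] at h
  have hKL := hBpd.trace_inv_mul_sub_card_add_log_det_div hApd.det_pos.ne' hE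
  rw [Fintype.card_fin] at hKL
  have hMm : M / m ≤ (M / m) ^ 3 := le_self_pow₀ ((one_le_div hm).mpr hmM) (by norm_num)
  calc (1 / 2) * ((B⁻¹ * A).trace - p + Real.log (B.det / A.det))
      ≤ (1 / 2) * ∑ i, (hE.eigenvalues i - 1) ^ 2 / (m / M) := by
        rw [hKL]
        gcongr with i
        exact Real.sub_one_sub_log_le_sq_div (by positivity) (hspec i)
    _ = (1 / 2) * (M / m) * ∑ i, (hE.eigenvalues i - 1) ^ 2 := by
        rw [← Finset.sum_div]; field_simp
    _ ≤ (1 / 2) * (M / m) ^ 3 * (M ^ 2 * frob (B - A) ^ 2) := by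
        gcongr
    _ = ((M / m) ^ 3 * M ^ 2 / 2) * (frob (B - A)) ^ 2 := by ring
end

section
/- Let Ω, Ω₀ be symmetric positive definite p×p matrices with all eigenvalues in [m, M], 0 < m ≤ M, and set Σ = Ω⁻¹, Σ₀ = Ω₀⁻¹. Then the Gaussian KL divergence KL(N(0,Σ₀) ‖ N(0,Σ)) = (1/2)(tr(Σ⁻¹Σ₀) − p + log det Σ − log det Σ₀) is at most K ‖Ω − Ω₀‖_F² for a constant K depending only on m and M. -/
open Matrix

namespace KLaux

variable {n : Type*} [Fintype n] [DecidableEq n]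

/-- trace is the sum of eigenvalues for a real hermitian matrix -/
lemma trace_eq_sum_eigenvalues {A : Matrix n n ℝ} (hA : A.IsHermitian) :
    A.trace = ∑ i, hA.eigenvalues i := by
  conv_lhs => rw [hA.spectral_theorem, Unitary.conjStarAlgAut_apply]
  rw [Matrix.trace_mul_cycle]
  have h1 : (star (hA.eigenvectorUnitary : Matrix n n ℝ)) *
      (hA.eigenvectorUnitary : Matrix n n ℝ) = 1 :=
    Matrix.mem_unitaryGroup_iff'.mp hA.eigenvectorUnitary.2
  rw [h1, Matrix.one_mul, Matrix.trace_diagonal]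
  simp

lemma trace_nonneg {A : Matrix n n ℝ} (hA : A.PosSemidef) : 0 ≤ A.trace := by
  rw [trace_eq_sum_eigenvalues hA.1]
  exact Finset.sum_nonneg fun i _ => hA.eigenvalues_nonneg i

lemma trace_mul_nonneg {A B : Matrix n n ℝ} (hA : A.PosSemidef) (hB : B.PosSemidef) :
    0 ≤ (A * B).trace := by
  obtain ⟨C, rfl⟩ : ∃ C : Matrix n n ℝ, A = Cᴴ * C := by
    open scoped MatrixOrder in exact CStarAlgebra.nonneg_iff_eq_star_mul_self.mp hA.nonneg
  rw [← Matrix.trace_mul_cycle C B Cᴴ]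
  exact trace_nonneg (hB.mul_mul_conjTranspose_same C)

lemma trace_mul_le {A B : Matrix n n ℝ} (c : ℝ) (hA : A.PosSemidef)
    (hB : (c • (1 : Matrix n n ℝ) - B).PosSemidef) :
    (A * B).trace ≤ c * A.trace := by
  have h := trace_mul_nonneg hA hB
  rw [Matrix.mul_sub, Matrix.trace_sub] at h
  have : A * (c • (1 : Matrix n n ℝ)) = c • A := by
    rw [Matrix.mul_smul, Matrix.mul_one]
  rw [this, Matrix.trace_smul, smul_eq_mul] at h
  linarith

/-- inverse via spectral theorem -/
lemma inv_spectral {A : Matrix n n ℝ} (hPD : A.PosDef) (hA : A.IsHermitian) :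
    A⁻¹ = (hA.eigenvectorUnitary : Matrix n n ℝ) *
      Matrix.diagonal (fun i => (hA.eigenvalues i)⁻¹) *
      (star (hA.eigenvectorUnitary : Matrix n n ℝ)) := by
  apply Matrix.inv_eq_right_inv
  nth_rw 1 [hA.spectral_theorem]
  have h1 : (star (hA.eigenvectorUnitary : Matrix n n ℝ)) *
      (hA.eigenvectorUnitary : Matrix n n ℝ) = 1 :=
    Matrix.mem_unitaryGroup_iff'.mp hA.eigenvectorUnitary.2
  have h2 : (hA.eigenvectorUnitary : Matrix n n ℝ) *
      (star (hA.eigenvectorUnitary : Matrix n n ℝ)) = 1 :=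
    Matrix.mem_unitaryGroup_iff.mp hA.eigenvectorUnitary.2
  have hev : ∀ i, hA.eigenvalues i ≠ 0 := fun i => (hPD.eigenvalues_pos i).ne'
  calc (hA.eigenvectorUnitary : Matrix n n ℝ) *
        Matrix.diagonal (RCLike.ofReal ∘ hA.eigenvalues) *
        (star (hA.eigenvectorUnitary : Matrix n n ℝ)) *
        ((hA.eigenvectorUnitary : Matrix n n ℝ) *
        Matrix.diagonal (fun i => (hA.eigenvalues i)⁻¹) *
        (star (hA.eigenvectorUnitary : Matrix n n ℝ)))
      = (hA.eigenvectorUnitary : Matrix n n ℝ) *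
        (Matrix.diagonal (RCLike.ofReal ∘ hA.eigenvalues) *
         Matrix.diagonal (fun i => (hA.eigenvalues i)⁻¹)) *
        (star (hA.eigenvectorUnitary : Matrix n n ℝ)) := by
        simp only [← Matrix.mul_assoc]
        rw [Matrix.mul_assoc ((hA.eigenvectorUnitary : Matrix n n ℝ) *
          Matrix.diagonal (RCLike.ofReal ∘ hA.eigenvalues))
          (star (hA.eigenvectorUnitary : Matrix n n ℝ)), h1, Matrix.mul_one]
    _ = 1 := by
        rw [Matrix.diagonal_mul_diagonal]
        have : (fun i => (RCLike.ofReal ∘ hA.eigenvalues) i * (hA.eigenvalues i)⁻¹)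
            = fun _ => (1 : ℝ) := by
          funext i; simp [mul_inv_cancel₀ (hev i)]
        rw [this, Matrix.diagonal_one, Matrix.mul_one, h2]

/-- if eigenvalues of PD A are ≥ m > 0 then (1/m) • 1 - A⁻¹ is PSD -/
lemma inv_le_smul_one {A : Matrix n n ℝ} (hPD : A.PosDef) (hA : A.IsHermitian)
    {m : ℝ} (hm : 0 < m) (hev : ∀ i, m ≤ hA.eigenvalues i) :
    (m⁻¹ • (1 : Matrix n n ℝ) - A⁻¹).PosSemidef := by
  have h2 : (hA.eigenvectorUnitary : Matrix n n ℝ) *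
      (star (hA.eigenvectorUnitary : Matrix n n ℝ)) = 1 :=
    Matrix.mem_unitaryGroup_iff.mp hA.eigenvectorUnitary.2
  have key : m⁻¹ • (1 : Matrix n n ℝ) - A⁻¹ =
      (hA.eigenvectorUnitary : Matrix n n ℝ) *
      Matrix.diagonal (fun i => m⁻¹ - (hA.eigenvalues i)⁻¹) *
      (star (hA.eigenvectorUnitary : Matrix n n ℝ)) := by
    rw [inv_spectral hPD hA]
    have hd : Matrix.diagonal (fun i => m⁻¹ - (hA.eigenvalues i)⁻¹)
        = m⁻¹ • (1 : Matrix n n ℝ) - Matrix.diagonal (fun i => (hA.eigenvalues i)⁻¹) := by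
      rw [Matrix.smul_one_eq_diagonal, ← Matrix.diagonal_sub]
    rw [hd, Matrix.mul_sub, Matrix.sub_mul]
    congr 1
    rw [Matrix.mul_smul, Matrix.mul_one, Matrix.smul_mul, h2]
  rw [key]
  refine Matrix.PosSemidef.mul_mul_conjTranspose_same ?_ _
  refine Matrix.PosSemidef.diagonal fun i => ?_
  show (0 : ℝ) ≤ m⁻¹ - (hA.eigenvalues i)⁻¹
  rw [sub_nonneg]
  exact inv_anti₀ hm (hev i)

/-- log-det inequality: log det X - log det Y ≤ trace (Y⁻¹ * X) - card -/
lemma logdet_le {X Y : Matrix n n ℝ} (hX : X.PosDef) (hY : Y.PosDef) :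
    Real.log X.det - Real.log Y.det ≤ (Y⁻¹ * X).trace - Fintype.card n := by
  open scoped MatrixOrder in set S := CFC.sqrt Y with hSdef
  have hSS : S * S = Y := by
    open scoped MatrixOrder in exact CFC.sqrt_mul_sqrt_self Y hY.posSemidef.nonneg
  have hSherm : S.IsHermitian := by
    open scoped MatrixOrder in exact (CFC.sqrt_nonneg Y).posSemidef.1
  have hdetY : 0 < Y.det := hY.det_pos
  have hdetX : 0 < X.det := hX.det_pos
  have hdetS : S.det ≠ 0 := by
    intro h
    rw [← hSS, Matrix.det_mul, h, mul_zero] at hdetY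
    exact lt_irrefl 0 hdetY
  have hSinv_herm : (S⁻¹).IsHermitian := hSherm.inv
  set B := S⁻¹ * X * S⁻¹ with hBdef
  have hBherm : B.IsHermitian := by
    rw [Matrix.IsHermitian, hBdef, Matrix.conjTranspose_mul, Matrix.conjTranspose_mul,
      hSinv_herm.eq, hX.1.eq, Matrix.mul_assoc]
  have hBpsd : B.PosSemidef := by
    have := hX.posSemidef.mul_mul_conjTranspose_same (S⁻¹)
    rwa [hSinv_herm.eq] at this
  have hdetB : B.det = X.det / Y.det := by
    rw [hBdef, Matrix.det_mul, Matrix.det_mul, Matrix.det_nonsing_inv, ← hSS, Matrix.det_mul]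
    field_simp
    rw [Ring.inverse_eq_inv', ← mul_pow, inv_mul_cancel₀ hdetS, one_pow]
  have hdetBpos : 0 < B.det := by rw [hdetB]; positivity
  have hevpos : ∀ i, 0 < hBherm.eigenvalues i := by
    intro i
    rcases lt_or_eq_of_le (hBpsd.eigenvalues_nonneg i) with h | h
    · exact h
    · exfalso
      have : B.det = 0 := by
        rw [hBherm.det_eq_prod_eigenvalues]
        exact Finset.prod_eq_zero (Finset.mem_univ i) (by simp [← h])
      rw [this] at hdetBpos; exact lt_irrefl 0 hdetBpos
  have htr : (Y⁻¹ * X).trace = B.trace := by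
    have hYinv : Y⁻¹ = S⁻¹ * S⁻¹ := by rw [← hSS, Matrix.mul_inv_rev]
    rw [hYinv, hBdef, Matrix.trace_mul_cycle S⁻¹ X S⁻¹]
  have hlog : Real.log X.det - Real.log Y.det = ∑ i, Real.log (hBherm.eigenvalues i) := by
    have h1 : Real.log X.det - Real.log Y.det = Real.log B.det := by
      rw [hdetB, Real.log_div hdetX.ne' hdetY.ne']
    have h2 : B.det = ∏ i, hBherm.eigenvalues i := by
      rw [hBherm.det_eq_prod_eigenvalues]; norm_num
    rw [h1, h2, Real.log_prod (fun i _ => (hevpos i).ne')]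
  rw [hlog, htr, trace_eq_sum_eigenvalues hBherm]
  have : ∀ i ∈ Finset.univ, Real.log (hBherm.eigenvalues i) ≤ hBherm.eigenvalues i - 1 :=
    fun i _ => Real.log_le_sub_one_of_pos (hevpos i)
  calc ∑ i, Real.log (hBherm.eigenvalues i) ≤ ∑ i : n, (hBherm.eigenvalues i - 1) :=
        Finset.sum_le_sum this
    _ = (∑ i, hBherm.eigenvalues i) - Fintype.card n := by
        rw [Finset.sum_sub_distrib]
        simp [Finset.card_univ]

end KLaux

/-- For symmetric positive definite `Ω`, `Ω₀` with all eigenvalues in `[m, M]`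
(`0 < m ≤ M`), the Gaussian KL divergence
`(1/2)(tr(Σ⁻¹Σ₀) − p + log det Σ − log det Σ₀)` with `Σ = Ω⁻¹`, `Σ₀ = Ω₀⁻¹`
is at most `K ‖Ω − Ω₀‖_F²` for a constant `K` depending only on `m` and `M`. -/
theorem stmt_12 (m M : ℝ) (hm : 0 < m) (hmM : m ≤ M) :
    ∃ K > (0 : ℝ), ∀ (p : ℕ) (Ω Ω₀ : Matrix (Fin p) (Fin p) ℝ),
      Ω.PosDef → Ω₀.PosDef →
      ∀ (hΩ : Ω.IsHermitian) (hΩ₀ : Ω₀.IsHermitian),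
      (∀ i, m ≤ hΩ.eigenvalues i ∧ hΩ.eigenvalues i ≤ M) →
      (∀ i, m ≤ hΩ₀.eigenvalues i ∧ hΩ₀.eigenvalues i ≤ M) →
      (1 / 2) * (Matrix.trace ((Ω⁻¹)⁻¹ * Ω₀⁻¹) - p
          + Real.log (Ω⁻¹).det - Real.log (Ω₀⁻¹).det)
        ≤ K * (frob (Ω - Ω₀)) ^ 2 := by
  refine ⟨1 / (2 * m ^ 2), by positivity, ?_⟩
  intro p Ω Ω₀ hPD hPD₀ hΩ hΩ₀ hev hev₀
  have hdet : IsUnit Ω.det := hPD.det_pos.ne'.isUnit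
  have hdet₀ : IsUnit Ω₀.det := hPD₀.det_pos.ne'.isUnit
  have hinvinv : (Ω⁻¹)⁻¹ = Ω := Matrix.nonsing_inv_nonsing_inv _ hdet
  have hlogdet : Real.log (Ω⁻¹).det = -Real.log Ω.det := by
    rw [Matrix.det_nonsing_inv, Ring.inverse_eq_inv', Real.log_inv]
  have hlogdet₀ : Real.log (Ω₀⁻¹).det = -Real.log Ω₀.det := by
    rw [Matrix.det_nonsing_inv, Ring.inverse_eq_inv', Real.log_inv]
  set D := Ω - Ω₀ with hDdef
  have hDher : D.IsHermitian := hΩ.sub hΩ₀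
  -- trace(Ω Ω₀⁻¹) - p = trace(D Ω₀⁻¹)
  have key1 : (Ω * Ω₀⁻¹).trace - p = (D * Ω₀⁻¹).trace := by
    rw [hDdef, Matrix.sub_mul, Matrix.trace_sub, Matrix.mul_nonsing_inv _ hdet₀,
      Matrix.trace_one]
    simp
  have key2 : Real.log Ω₀.det - Real.log Ω.det ≤ (Ω⁻¹ * Ω₀).trace - p := by
    have := KLaux.logdet_le hPD₀ hPD
    simpa using this
  have key3 : (Ω⁻¹ * Ω₀).trace - p = -(D * Ω⁻¹).trace := by
    rw [Matrix.trace_mul_comm, hDdef, Matrix.sub_mul, Matrix.trace_sub,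
      Matrix.mul_nonsing_inv _ hdet]
    simp
  -- resolvent identity
  have hres : Ω₀⁻¹ - Ω⁻¹ = Ω⁻¹ * D * Ω₀⁻¹ := by
    rw [hDdef, Matrix.mul_sub, Matrix.nonsing_inv_mul _ hdet, Matrix.sub_mul,
      Matrix.one_mul, Matrix.mul_assoc, Matrix.mul_nonsing_inv _ hdet₀, Matrix.mul_one]
  have key4 : (D * Ω₀⁻¹).trace - (D * Ω⁻¹).trace = ((D * Ω⁻¹ * D) * Ω₀⁻¹).trace := by
    rw [← Matrix.trace_sub, ← Matrix.mul_sub, hres]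
    congr 1
    rw [← Matrix.mul_assoc, ← Matrix.mul_assoc]
  have hADpsd : (D * Ω⁻¹ * D).PosSemidef := by
    have := hPD.inv.posSemidef.mul_mul_conjTranspose_same D
    rwa [hDher.eq] at this
  have hDDpsd : (D * D).PosSemidef := by
    have := Matrix.posSemidef_self_mul_conjTranspose D
    rwa [hDher.eq] at this
  have hb : (m⁻¹ • (1 : Matrix (Fin p) (Fin p) ℝ) - Ω⁻¹).PosSemidef :=
    KLaux.inv_le_smul_one hPD hΩ hm (fun i => (hev i).1)
  have hb₀ : (m⁻¹ • (1 : Matrix (Fin p) (Fin p) ℝ) - Ω₀⁻¹).PosSemidef :=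
    KLaux.inv_le_smul_one hPD₀ hΩ₀ hm (fun i => (hev₀ i).1)
  have key6 : ((D * Ω⁻¹ * D) * Ω₀⁻¹).trace ≤ m⁻¹ * (D * Ω⁻¹ * D).trace :=
    KLaux.trace_mul_le m⁻¹ hADpsd hb₀
  have key7 : (D * Ω⁻¹ * D).trace = ((D * D) * Ω⁻¹).trace := by
    rw [Matrix.trace_mul_cycle D Ω⁻¹ D]
  have key8 : ((D * D) * Ω⁻¹).trace ≤ m⁻¹ * (D * D).trace :=
    KLaux.trace_mul_le m⁻¹ hDDpsd hb
  have key9 : (D * D).trace = ∑ i, ∑ j, (D i j) ^ 2 := by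
    rw [Matrix.trace]
    simp only [Matrix.diag_apply, Matrix.mul_apply]
    refine Finset.sum_congr rfl fun i _ => Finset.sum_congr rfl fun j _ => ?_
    rw [pow_two, show D j i = D i j from by simpa using hDher.apply i j]
  have hfrob : frob D ^ 2 = ∑ i, ∑ j, (D i j) ^ 2 := by
    rw [frob, Real.sq_sqrt]
    positivity
  have hminv : (0 : ℝ) < m⁻¹ := by positivity
  have chain : (Ω * Ω₀⁻¹).trace - (p : ℝ) + (Real.log Ω₀.det - Real.log Ω.det)
      ≤ m⁻¹ * (m⁻¹ * frob D ^ 2) := by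
    calc (Ω * Ω₀⁻¹).trace - (p : ℝ) + (Real.log Ω₀.det - Real.log Ω.det)
        ≤ (D * Ω₀⁻¹).trace + -(D * Ω⁻¹).trace := by linarith [key1, key2, key3]
      _ = ((D * Ω⁻¹ * D) * Ω₀⁻¹).trace := by rw [← key4]; ring
      _ ≤ m⁻¹ * (D * Ω⁻¹ * D).trace := key6
      _ = m⁻¹ * ((D * D) * Ω⁻¹).trace := by rw [key7]
      _ ≤ m⁻¹ * (m⁻¹ * (D * D).trace) := mul_le_mul_of_nonneg_left key8 hminv.le
      _ = m⁻¹ * (m⁻¹ * frob D ^ 2) := by rw [key9, ← hfrob]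
  calc (1 / 2) * (Matrix.trace ((Ω⁻¹)⁻¹ * Ω₀⁻¹) - p
          + Real.log (Ω⁻¹).det - Real.log (Ω₀⁻¹).det)
      = (1 / 2) * ((Ω * Ω₀⁻¹).trace - (p : ℝ)
          + (Real.log Ω₀.det - Real.log Ω.det)) := by
        rw [hinvinv, hlogdet, hlogdet₀]; ring
    _ ≤ (1 / 2) * (m⁻¹ * (m⁻¹ * frob D ^ 2)) :=
        mul_le_mul_of_nonneg_left chain (by norm_num)
    _ = 1 / (2 * m ^ 2) * frob D ^ 2 := by
        field_simp
end
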